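/- arXiv:math/0612730 — 3 statements merged into one kernel-verified Lean document; each statement's English description precedes it below -/
import Mathlib

section
/- Assume a and b are both distinct from a^{-1} and b^{-1}. Then a Laurent polynomial f satisfies T_1 f = −f if and only if f[z] = z^{-1}(1−az)(1−bz)·g[z] for some symmetric Laurent polynomial g (i.e. g[z] = g[z^{-1}]). -/
open scoped BigOperators

noncomputable section

/-- The field of rational functions over ℂ, in which Laurent polynomials live. -/
local notation "F" => RatFunc ℂ

/-- Scalar constants in `F`. -/
def Cc (x : ℂ) : F := RatFunc.C x

/-- The variable `z`. -/
def Xv : F := RatFunc.X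

/-- Substitution `z ↦ t` in a rational function (well defined since the
substitution points used here are transcendental over ℂ). -/
def subst (t : F) (f : F) : F := RatFunc.eval (RatFunc.C) t f

/-- `f` is a Laurent polynomial in `z`. -/
def IsLaurent (f : F) : Prop :=
  ∃ (p : Polynomial ℂ) (n : ℕ), f = algebraMap (Polynomial ℂ) F p / Xv ^ n

/-- The DAHA operator `T₁` of the basic representation. -/
def T1op (a b : ℂ) (f : F) : F :=
  ((Cc a + Cc b) * Xv - (1 + Cc a * Cc b)) / (1 - Xv ^ 2) * f
    + ((1 - Cc a * Xv) * (1 - Cc b * Xv)) / (1 - Xv ^ 2) * subst Xv⁻¹ f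

/-- The DAHA operator `T₀` of the basic representation. -/
def T0op (q c d : ℂ) (f : F) : F :=
  (Cc q)⁻¹ * Xv * ((Cc c * Cc d + Cc q) * Xv - (Cc c + Cc d) * Cc q) / (Cc q - Xv ^ 2) * f
    - ((Cc c - Xv) * (Cc d - Xv)) / (Cc q - Xv ^ 2) * subst (Cc q * Xv⁻¹) f

/-- The inverse of `T₁`: `T₁⁻¹ = -(ab)⁻¹T₁ - (1 + (ab)⁻¹)`. -/
def T1inv (a b : ℂ) (f : F) : F :=
  -(Cc a * Cc b)⁻¹ * T1op a b f - (1 + (Cc a * Cc b)⁻¹) * f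

/-- The inverse of `T₀`: `T₀⁻¹ = -q(cd)⁻¹T₀ - (1 + q(cd)⁻¹)`. -/
def T0inv (q c d : ℂ) (f : F) : F :=
  -(Cc q * (Cc c * Cc d)⁻¹) * T0op q c d f - (1 + Cc q * (Cc c * Cc d)⁻¹) * f

/-- `Y = T₁T₀`. -/
def Yop (q a b c d : ℂ) (f : F) : F := T1op a b (T0op q c d f)

/-- `Y⁻¹ = T₀⁻¹T₁⁻¹`. -/
def Yinv (q a b c d : ℂ) (f : F) : F := T0inv q c d (T1inv a b f)

/-- `D = Y + q⁻¹abcd·Y⁻¹`. -/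
def Dop (q a b c d : ℂ) (f : F) : F :=
  Yop q a b c d f + Cc (q⁻¹ * (a * b * c * d)) * Yinv q a b c d f

/-- The Askey–Wilson second order q-difference operator `D_sym`. -/
def DsymOp (q a b c d : ℂ) (f : F) : F :=
  ((1 - Cc a * Xv) * (1 - Cc b * Xv) * (1 - Cc c * Xv) * (1 - Cc d * Xv)) /
      ((1 - Xv ^ 2) * (1 - Cc q * Xv ^ 2)) * (subst (Cc q * Xv) f - f)
    + ((Cc a - Xv) * (Cc b - Xv) * (Cc c - Xv) * (Cc d - Xv)) /
      ((1 - Xv ^ 2) * (Cc q - Xv ^ 2)) * (subst ((Cc q)⁻¹ * Xv) f - f)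
    + (1 + (Cc q)⁻¹ * Cc a * Cc b * Cc c * Cc d) * f

/-- q-Pochhammer symbol `(x;q)_k`. -/
def qPoch (x q : ℂ) (k : ℕ) : ℂ := ∏ j ∈ Finset.range k, (1 - x * q ^ j)

/-- The monic Askey–Wilson Laurent polynomial `P_n[z;a,b,c,d|q]`. -/
def AWP (q a b c d : ℂ) (n : ℕ) : F :=
  Cc (a⁻¹ ^ n) * ∑ k ∈ Finset.range (n + 1),
    Cc (qPoch (q⁻¹ ^ n) q k * qPoch (a * b * q ^ k) q (n - k) * qPoch (a * c * q ^ k) q (n - k)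
        * qPoch (a * d * q ^ k) q (n - k) * q ^ k
        / (qPoch q q k * qPoch (a * b * c * d * q ^ (n + k) / q) q (n - k)))
      * (∏ j ∈ Finset.range k, (1 - Cc a * Xv * Cc (q ^ j)))
      * (∏ j ∈ Finset.range k, (1 - Cc a * Xv⁻¹ * Cc (q ^ j)))

/-- `Q_n[z] := (ab)⁻¹ z⁻¹ (1-az)(1-bz) P_{n-1}[z;qa,qb,c,d|q]`. -/
def Qpoly (q a b c d : ℂ) (n : ℕ) : F :=
  (Cc (a * b))⁻¹ * Xv⁻¹ * (1 - Cc a * Xv) * (1 - Cc b * Xv) *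
    AWP q (q * a) (q * b) c d (n - 1)

/-- Elementary symmetric polynomials in a,b,c,d. -/
def esym1 (a b c d : ℂ) : ℂ := a + b + c + d
def esym2 (a b c d : ℂ) : ℂ := a*b + a*c + b*c + a*d + b*d + c*d
def esym3 (a b c d : ℂ) : ℂ := a*b*c + a*b*d + a*c*d + b*c*d
def esym4 (a b c d : ℂ) : ℂ := a*b*c*d

/-!
`T₁ f = -f` is equivalent to `(1 - az)(1 - bz) f[z⁻¹] = (z - a)(z - b) f[z]`. For
`f = z⁻¹(1 - az)(1 - bz) g` both sides equal `z⁻¹(1 - az)(1 - bz)(z - a)(z - b)` times `g[z⁻¹]`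
resp. `g[z]`, so the equation says exactly that `g` is symmetric. It remains to see that `g` is a
Laurent polynomial: writing `f = p / zⁿ` and clearing denominators, `(1 - az)(1 - bz)` divides
`(z - a)(z - b) zᵐ p`, and the hypotheses on `a, b` make it coprime to `(z - a)(z - b) z`, so it
divides `p`.
-/

open Polynomial

lemma algebraMap_X_eq_Xv : algebraMap ℂ[X] F X = Xv := RatFunc.algebraMap_X

lemma algebraMap_one_sub_C_mul_X (c : ℂ) :
    algebraMap ℂ[X] F (1 - C c * X) = 1 - Cc c * Xv := by
  simp [Cc, Xv]

lemma algebraMap_X_sub_C (c : ℂ) : algebraMap ℂ[X] F (X - C c) = Xv - Cc c := by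
  simp [Cc, Xv]

lemma one_sub_Cc_mul_Xv_ne_zero (c : ℂ) : (1 : F) - Cc c * Xv ≠ 0 := by
  rw [← algebraMap_one_sub_C_mul_X]
  refine RatFunc.algebraMap_ne_zero fun h ↦ ?_
  simpa using congrArg (eval 0) h

lemma Xv_sub_Cc_ne_zero (c : ℂ) : (Xv : F) - Cc c ≠ 0 := by
  rw [← algebraMap_X_sub_C]
  exact RatFunc.algebraMap_ne_zero (X_sub_C_ne_zero c)

lemma isCoprime_one_sub_C_mul_X_X {R : Type*} [CommRing R] (a : R) :
    IsCoprime (1 - C a * X) X :=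
  ⟨1, C a, by ring⟩

lemma isCoprime_one_sub_C_mul_X_X_sub_C {K : Type*} [Field K] {a c : K} (h : c ≠ a⁻¹) :
    IsCoprime (1 - C a * X) (X - C c) := by
  have hu : 1 - a * c ≠ 0 := sub_ne_zero.mpr fun h' ↦ h (eq_inv_of_mul_eq_one_right h'.symm)
  have hinv : C (1 - a * c)⁻¹ * C (1 - a * c) = 1 := by rw [← C_mul, inv_mul_cancel₀ hu, C_1]
  refine ⟨C (1 - a * c)⁻¹, C ((1 - a * c)⁻¹ * a), ?_⟩
  simp only [map_sub, map_mul, map_one] at hinv ⊢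
  linear_combination hinv

lemma eval₂_C_Xv_inv_injective : Function.Injective (eval₂RingHom RatFunc.C (Xv⁻¹ : F)) :=
  transcendental_iff_injective.mp <| by
    rw [Transcendental, IsAlgebraic.inv_iff]
    exact RatFunc.transcendental_X

/-- `subst Xv⁻¹` as a ring hom: `RatFunc.eval` is not multiplicative in general, but it is at the
transcendental point `z⁻¹`. -/
def substInv : F →+* F :=
  RatFunc.liftRingHom (eval₂RingHom RatFunc.C Xv⁻¹)
    (nonZeroDivisors_le_comap_nonZeroDivisors_of_injective _ eval₂_C_Xv_inv_injective)

lemma subst_inv_eq_substInv (f : F) : subst Xv⁻¹ f = substInv f := by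
  rw [substInv, RatFunc.liftRingHom_apply]
  rfl

lemma substInv_algebraMap (p : ℂ[X]) :
    substInv (algebraMap ℂ[X] F p) = p.eval₂ RatFunc.C Xv⁻¹ :=
  RatFunc.liftRingHom_algebraMap _ _ p

lemma substInv_Xv : substInv Xv = Xv⁻¹ := by
  simp [substInv, Xv]

lemma substInv_Cc (c : ℂ) : substInv (Cc c) = Cc c := by
  simp [substInv, Cc]

lemma substInv_algebraMap_mul_pow_natDegree (p : ℂ[X]) :
    substInv (algebraMap ℂ[X] F p) * Xv ^ p.natDegree = algebraMap ℂ[X] F p.reverse := by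
  let _ : Invertible (Xv⁻¹ : F) := invertibleOfNonzero (inv_ne_zero RatFunc.X_ne_zero)
  have h := eval₂_reverse_mul_pow RatFunc.C (Xv⁻¹ : F) p
  rw [invOf_eq_inv, inv_inv] at h
  rw [substInv_algebraMap, ← h, mul_assoc, ← mul_pow, inv_mul_cancel₀ RatFunc.X_ne_zero, one_pow,
    mul_one]
  exact RatFunc.aeval_X_left_eq_algebraMap _

lemma IsLaurent.substInv {f : F} (hf : IsLaurent f) : IsLaurent (substInv f) := by
  obtain ⟨p, n, rfl⟩ := hf
  refine ⟨p.reverse * X ^ n, p.natDegree, ?_⟩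
  have hX : (Xv : F) ≠ 0 := RatFunc.X_ne_zero
  rw [map_div₀, map_pow, substInv_Xv, map_mul, ← substInv_algebraMap_mul_pow_natDegree, map_pow,
    algebraMap_X_eq_Xv, inv_pow, div_inv_eq_mul, mul_right_comm,
    mul_div_cancel_right₀ _ (pow_ne_zero _ hX)]

lemma IsLaurent.dvd_of_algebraMap_mul_eq {P Q p : ℂ[X]} {n : ℕ} {u : F}
    (hPQ : IsCoprime P Q) (hPX : IsCoprime P X) (hu : IsLaurent u)
    (h : algebraMap ℂ[X] F P * u = algebraMap ℂ[X] F Q * (algebraMap ℂ[X] F p / Xv ^ n)) :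
    P ∣ p := by
  obtain ⟨r, m, rfl⟩ := hu
  have hX : (Xv : F) ≠ 0 := RatFunc.X_ne_zero
  have hpoly : P * r * X ^ n = Q * X ^ m * p := by
    apply RatFunc.algebraMap_injective ℂ
    simp only [map_mul, map_pow, algebraMap_X_eq_Xv]
    field_simp at h
    linear_combination h
  exact (hPQ.mul_right (hPX.pow_right)).dvd_of_dvd_mul_left ⟨r * X ^ n, by rw [← hpoly]; ring⟩

lemma T1op_eq_neg_iff (a b : ℂ) (f : F) :
    T1op a b f = -f ↔
      (1 - Cc a * Xv) * (1 - Cc b * Xv) * substInv f = (Xv - Cc a) * (Xv - Cc b) * f := by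
  have h : (1 : F) - Xv ^ 2 ≠ 0 := by
    have h' : (1 : F) - Xv ^ 2 = -((Xv - Cc 1) * (Xv - Cc (-1))) := by simp [Cc]; ring
    rw [h', neg_ne_zero]
    exact mul_ne_zero (Xv_sub_Cc_ne_zero 1) (Xv_sub_Cc_ne_zero (-1))
  rw [T1op, subst_inv_eq_substInv, div_mul_eq_mul_div, div_mul_eq_mul_div, ← add_div,
    div_eq_iff h]
  constructor <;> intro h <;> linear_combination h

lemma T1op_mul_eq_neg_iff (a b : ℂ) (g : F) :
    T1op a b (Xv⁻¹ * (1 - Cc a * Xv) * (1 - Cc b * Xv) * g)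
        = -(Xv⁻¹ * (1 - Cc a * Xv) * (1 - Cc b * Xv) * g) ↔ substInv g = g := by
  have hX : (Xv : F) ≠ 0 := RatFunc.X_ne_zero
  set c := Xv⁻¹ * (1 - Cc a * Xv) * (1 - Cc b * Xv) * (Xv - Cc a) * (Xv - Cc b)
  have hc : c ≠ 0 := by
    simp only [c, ne_eq, mul_eq_zero, inv_eq_zero, hX, one_sub_Cc_mul_Xv_ne_zero,
      Xv_sub_Cc_ne_zero, or_self, not_false_eq_true]
  have hL : (1 - Cc a * Xv) * (1 - Cc b * Xv)
      * substInv (Xv⁻¹ * (1 - Cc a * Xv) * (1 - Cc b * Xv) * g) = c * substInv g := by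
    simp only [c, map_mul, map_sub, map_one, map_inv₀, substInv_Xv, substInv_Cc, inv_inv]
    field_simp
  rw [T1op_eq_neg_iff, hL, ← mul_right_inj' hc (b := substInv g)]
  constructor <;> intro h <;> linear_combination h

lemma exists_isLaurent_eq_mul_of_T1op_eq_neg {a b : ℂ} (haa : a ≠ a⁻¹) (hab : a ≠ b⁻¹)
    (hba : b ≠ a⁻¹) (hbb : b ≠ b⁻¹) {f : F} (hf : IsLaurent f) (hT : T1op a b f = -f) :
    ∃ g, IsLaurent g ∧ f = Xv⁻¹ * (1 - Cc a * Xv) * (1 - Cc b * Xv) * g := by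
  obtain ⟨p, n, rfl⟩ := id hf
  have hdvd : (1 - C a * X) * (1 - C b * X) ∣ p := by
    refine hf.substInv.dvd_of_algebraMap_mul_eq (n := n) (Q := (X - C a) * (X - C b)) ?_ ?_ ?_
    · exact .mul_left
        (.mul_right (isCoprime_one_sub_C_mul_X_X_sub_C haa) (isCoprime_one_sub_C_mul_X_X_sub_C hba))
        (.mul_right (isCoprime_one_sub_C_mul_X_X_sub_C hab) (isCoprime_one_sub_C_mul_X_X_sub_C hbb))
    · exact (isCoprime_one_sub_C_mul_X_X a).mul_left (isCoprime_one_sub_C_mul_X_X b)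
    · simpa only [map_mul, algebraMap_one_sub_C_mul_X, algebraMap_X_sub_C]
        using (T1op_eq_neg_iff a b _).mp hT
  obtain ⟨r, rfl⟩ := hdvd
  refine ⟨algebraMap ℂ[X] F (X * r) / Xv ^ n, ⟨_, n, rfl⟩, ?_⟩
  have hX : (Xv : F) ≠ 0 := RatFunc.X_ne_zero
  simp only [map_mul, algebraMap_one_sub_C_mul_X, algebraMap_X_eq_Xv]
  field_simp

theorem stmt6_general (a b : ℂ)
    (haa : a ≠ a⁻¹) (hab : a ≠ b⁻¹) (hba : b ≠ a⁻¹) (hbb : b ≠ b⁻¹) :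
    ∀ f : RatFunc ℂ, IsLaurent f →
      (T1op a b f = -f ↔
        ∃ g : RatFunc ℂ, IsLaurent g ∧ subst Xv⁻¹ g = g ∧
          f = Xv⁻¹ * (1 - Cc a * Xv) * (1 - Cc b * Xv) * g) := by
  intro f hf
  simp only [subst_inv_eq_substInv]
  constructor
  · intro hT
    obtain ⟨g, hg, rfl⟩ := exists_isLaurent_eq_mul_of_T1op_eq_neg haa hab hba hbb hf hT
    exact ⟨g, hg, (T1op_mul_eq_neg_iff a b g).mp hT, rfl⟩
  · rintro ⟨g, -, hg, rfl⟩
    exact (T1op_mul_eq_neg_iff a b g).mpr hg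

theorem stmt6 (q a b : ℂ) (hq : q ≠ 0) (hroot : ∀ m : ℕ, 1 ≤ m → q ^ m ≠ 1)
    (ha : a ≠ 0) (hb : b ≠ 0)
    (haa : a ≠ a⁻¹) (hab : a ≠ b⁻¹) (hba : b ≠ a⁻¹) (hbb : b ≠ b⁻¹) :
    ∀ f : RatFunc ℂ, IsLaurent f →
      (T1op a b f = -f ↔
        ∃ g : RatFunc ℂ, IsLaurent g ∧ subst Xv⁻¹ g = g ∧
          f = Xv⁻¹ * (1 - Cc a * Xv) * (1 - Cc b * Xv) * g) :=
  stmt6_general a b haa hab hba hbb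

end
end

section
/- The operators K_0 := D_sym and K_1 := multiplication by z + z^{-1}, acting on symmetric Laurent polynomials, satisfy the AW(3) relation (q + q^{-1})K_1 K_0 K_1 − K_1² K_0 − K_0 K_1² = B·K_1 + C_0·K_0 + D_0, with structure constants B = (1 − q^{-1})²(e_3 + q·e_1), C_0 = (q − q^{-1})², D_0 = −q^{-3}(1−q)²(1+q)(e_4 + q·e_2 + q²). -/
open scoped BigOperators

noncomputable section

/-- The field of rational functions over ℂ, in which Laurent polynomials live. -/
local notation "F" => RatFunc ℂ

/-!
`D_sym` is a `q`-difference operator `α (T_q - 1) + β (T_{q⁻¹} - 1) + γ`, and on Laurent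
polynomials the shifts `T_{q^{±1}}` turn multiplication by `x = z + z⁻¹` into multiplication by
`x_± = q^{±1}z + (q^{±1}z)⁻¹`. Since `(q + q⁻¹) x x_± = x² + x_±² + (q - q⁻¹)²`, the shifted
parts of the left-hand side of AW(3) add up to `(q - q⁻¹)² D_sym f`, and what remains is `f`
times `(γ - α - β) ((q + q⁻¹ - 2) x² - (q - q⁻¹)²)`, a rational function of `z` that turns out
to equal `B x + D₀`.
-/

lemma Xv_ne_zero : (Xv : F) ≠ 0 := RatFunc.X_ne_zero

lemma Cc_ne_zero {x : ℂ} (hx : x ≠ 0) : Cc x ≠ 0 :=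
  (map_ne_zero RatFunc.C).mpr hx

lemma Cc_sub_Cc_mul_Xv_sq_ne_zero {u : ℂ} (hu : u ≠ 0) (v : ℂ) : Cc u - Cc v * Xv ^ 2 ≠ 0 := by
  have hp : (Polynomial.C u - Polynomial.C v * Polynomial.X ^ 2 : Polynomial ℂ) ≠ 0 := by
    intro h
    simpa [hu] using congrArg (Polynomial.eval 0) h
  simpa [Cc, Xv] using RatFunc.algebraMap_ne_zero hp

lemma subst_algebraMap_div_Xv_pow {t : F} (ht : t ≠ 0) (p : Polynomial ℂ) (n : ℕ) :
    subst t (algebraMap (Polynomial ℂ) F p / Xv ^ n) = p.eval₂ RatFunc.C t / t ^ n := by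
  set g : F := algebraMap (Polynomial ℂ) F p / Xv ^ n
  have hXn : (Xv : F) ^ n = algebraMap (Polynomial ℂ) F (Polynomial.X ^ n) := by
    simp [Xv]
  -- `subst` is multiplicative only where the denominators do not vanish at `t`
  have hg_denom : g.denom.eval₂ RatFunc.C t ≠ 0 := by
    obtain ⟨s, hs⟩ : g.denom ∣ Polynomial.X ^ n := by
      simp only [g, hXn]; exact RatFunc.denom_div_dvd p _
    intro h0
    have := congrArg (Polynomial.eval₂ RatFunc.C t) hs
    simp [h0, ht] at this
  have hXn_denom : ((Xv : F) ^ n).denom.eval₂ RatFunc.C t ≠ 0 := by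
    rw [hXn, RatFunc.denom_algebraMap]
    simp
  have hmul : subst t (g * Xv ^ n) = subst t g * subst t (Xv ^ n) :=
    RatFunc.eval_mul _ _ hg_denom hXn_denom
  rw [div_mul_cancel₀ _ (pow_ne_zero n Xv_ne_zero), hXn] at hmul
  simp only [subst, RatFunc.eval_algebraMap, Algebra.algebraMap_self, RingHom.id_apply,
    Polynomial.eval₂_X_pow] at hmul
  rw [subst, hmul, mul_div_cancel_right₀ _ (pow_ne_zero n ht)]

lemma Xv_add_inv_mul_algebraMap_div_Xv_pow (p : Polynomial ℂ) (n : ℕ) :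
    (Xv + Xv⁻¹) * (algebraMap (Polynomial ℂ) F p / Xv ^ n)
      = algebraMap (Polynomial ℂ) F ((Polynomial.X ^ 2 + 1) * p) / Xv ^ (n + 1) := by
  have hX := Xv_ne_zero
  simp only [map_mul, map_add, map_pow, map_one, RatFunc.algebraMap_X]
  change _ = ((Xv : F) ^ 2 + 1) * _ / _
  field_simp
  ring

namespace IsLaurent

lemma Xv_add_inv_mul {f : F} (hf : IsLaurent f) : IsLaurent ((Xv + Xv⁻¹) * f) := by
  obtain ⟨p, n, rfl⟩ := hf
  exact ⟨_, _, Xv_add_inv_mul_algebraMap_div_Xv_pow p n⟩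

lemma subst_Xv_add_inv_mul {f : F} (hf : IsLaurent f) {t : F} (ht : t ≠ 0) :
    subst t ((Xv + Xv⁻¹) * f) = (t + t⁻¹) * subst t f := by
  obtain ⟨p, n, rfl⟩ := hf
  rw [Xv_add_inv_mul_algebraMap_div_Xv_pow, subst_algebraMap_div_Xv_pow ht,
    subst_algebraMap_div_Xv_pow ht]
  simp only [Polynomial.eval₂_mul, Polynomial.eval₂_add, Polynomial.eval₂_X_pow,
    Polynomial.eval₂_one]
  field_simp
  ring

end IsLaurent

/-- `f₁` and `f₂` stand for the shifts `f[qz]` and `f[q⁻¹z]`. -/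
def qDiffComb {R : Type*} [CommRing R] (α β γ f f₁ f₂ : R) : R :=
  α * (f₁ - f) + β * (f₂ - f) + γ * f

/-- `x`, `u`, `v` stand for `z + z⁻¹`, `qz + (qz)⁻¹`, `q⁻¹z + (q⁻¹z)⁻¹`, and `p` for `q⁻¹`. -/
theorem qDiffComb_askeyWilson {R : Type*} [CommRing R] {q p x u v : R}
    (hu : (q + p) * x * u = x ^ 2 + u ^ 2 + (q - p) ^ 2)
    (hv : (p + q) * x * v = x ^ 2 + v ^ 2 + (p - q) ^ 2) (α β γ f f₁ f₂ : R) :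
    (q + p) * (x * qDiffComb α β γ (x * f) (u * f₁) (v * f₂))
        - x * (x * qDiffComb α β γ f f₁ f₂)
        - qDiffComb α β γ (x * (x * f)) (u * (u * f₁)) (v * (v * f₂))
      = (q - p) ^ 2 * qDiffComb α β γ f f₁ f₂
        + (γ - α - β) * ((q + p - 2) * x ^ 2 - (q - p) ^ 2) * f := by
  unfold qDiffComb
  linear_combination (α * f₁) * hu + (β * f₂) * hv

lemma add_inv_mul_add_inv_mul_add_inv {K : Type*} [Field K] {s z : K} (hs : s ≠ 0) (hz : z ≠ 0) :
    (s + s⁻¹) * (z + z⁻¹) * (s * z + (s * z)⁻¹)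
      = (z + z⁻¹) ^ 2 + (s * z + (s * z)⁻¹) ^ 2 + (s - s⁻¹) ^ 2 := by
  field_simp
  ring

theorem dsym_diagonal_coeff_mul {K : Type*} [Field K] {q z : K} (hq : q ≠ 0) (hz : z ≠ 0)
    (h₁ : 1 - z ^ 2 ≠ 0) (h₂ : 1 - q * z ^ 2 ≠ 0) (h₃ : q - z ^ 2 ≠ 0) (a b c d : K) :
    (1 + q⁻¹ * a * b * c * d
        - (1 - a * z) * (1 - b * z) * (1 - c * z) * (1 - d * z) / ((1 - z ^ 2) * (1 - q * z ^ 2))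
        - (a - z) * (b - z) * (c - z) * (d - z) / ((1 - z ^ 2) * (q - z ^ 2)))
      * ((q + q⁻¹ - 2) * (z + z⁻¹) ^ 2 - (q - q⁻¹) ^ 2)
    = (1 - q⁻¹) ^ 2 * (a * b * c + a * b * d + a * c * d + b * c * d + q * (a + b + c + d))
        * (z + z⁻¹)
      - q ^ (-3 : ℤ) * (1 - q) ^ 2 * (1 + q) *
        (a * b * c * d + q * (a * b + a * c + b * c + a * d + b * d + c * d) + q ^ 2) := by
  have h₂' : 1 - z ^ 2 * q ≠ 0 := by rwa [mul_comm]
  field_simp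
  ring

lemma DsymOp_eq_qDiffComb (q a b c d : ℂ) (f : F) :
    DsymOp q a b c d f
      = qDiffComb
          ((1 - Cc a * Xv) * (1 - Cc b * Xv) * (1 - Cc c * Xv) * (1 - Cc d * Xv) /
            ((1 - Xv ^ 2) * (1 - Cc q * Xv ^ 2)))
          ((Cc a - Xv) * (Cc b - Xv) * (Cc c - Xv) * (Cc d - Xv) /
            ((1 - Xv ^ 2) * (Cc q - Xv ^ 2)))
          (1 + (Cc q)⁻¹ * Cc a * Cc b * Cc c * Cc d)
          f (subst (Cc q * Xv) f) (subst ((Cc q)⁻¹ * Xv) f) :=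
  rfl

theorem stmt10_general (q a b c d : ℂ) (hq : q ≠ 0) :
    ∀ f : RatFunc ℂ, IsLaurent f → subst Xv⁻¹ f = f →
      Cc (q + q⁻¹) * ((Xv + Xv⁻¹) * DsymOp q a b c d ((Xv + Xv⁻¹) * f))
        - (Xv + Xv⁻¹) * ((Xv + Xv⁻¹) * DsymOp q a b c d f)
        - DsymOp q a b c d ((Xv + Xv⁻¹) * ((Xv + Xv⁻¹) * f))
      = Cc ((1 - q⁻¹) ^ 2 * (esym3 a b c d + q * esym1 a b c d)) * ((Xv + Xv⁻¹) * f)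
        + Cc ((q - q⁻¹) ^ 2) * DsymOp q a b c d f
        + Cc (-(q ^ (-3 : ℤ)) * (1 - q) ^ 2 * (1 + q) *
            (esym4 a b c d + q * esym2 a b c d + q ^ 2)) * f := by
  intro f hf _
  have hCq : Cc q ≠ 0 := Cc_ne_zero hq
  have hX := Xv_ne_zero
  simp only [DsymOp_eq_qDiffComb, hf.Xv_add_inv_mul.subst_Xv_add_inv_mul (mul_ne_zero hCq hX),
    hf.Xv_add_inv_mul.subst_Xv_add_inv_mul (mul_ne_zero (inv_ne_zero hCq) hX),
    hf.subst_Xv_add_inv_mul (mul_ne_zero hCq hX),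
    hf.subst_Xv_add_inv_mul (mul_ne_zero (inv_ne_zero hCq) hX)]
  have hu := add_inv_mul_add_inv_mul_add_inv hCq hX
  have hv := add_inv_mul_add_inv_mul_add_inv (inv_ne_zero hCq) hX
  rw [inv_inv] at hv
  have hCq_add : Cc (q + q⁻¹) = Cc q + (Cc q)⁻¹ := by simp only [Cc, map_add, map_inv₀]
  rw [hCq_add, qDiffComb_askeyWilson hu hv]
  have h₁ : (1 : F) - Xv ^ 2 ≠ 0 := by
    simpa [Cc] using Cc_sub_Cc_mul_Xv_sq_ne_zero one_ne_zero 1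
  have h₂ : (1 : F) - Cc q * Xv ^ 2 ≠ 0 := by
    simpa [Cc] using Cc_sub_Cc_mul_Xv_sq_ne_zero one_ne_zero q
  have h₃ : Cc q - Xv ^ 2 ≠ 0 := by
    simpa [Cc] using Cc_sub_Cc_mul_Xv_sq_ne_zero hq 1
  have hδ := dsym_diagonal_coeff_mul hCq hX h₁ h₂ h₃ (Cc a) (Cc b) (Cc c) (Cc d)
  simp only [Cc, esym1, esym2, esym3, esym4, map_add, map_sub, map_mul, map_neg, map_one,
    map_pow, map_inv₀, map_zpow₀] at hδ ⊢
  linear_combination f * hδ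

theorem stmt10 (q a b c d : ℂ) (hq : q ≠ 0) (hroot : ∀ m : ℕ, 1 ≤ m → q ^ m ≠ 1)
    (ha : a ≠ 0) (hb : b ≠ 0) (hc : c ≠ 0) (hd : d ≠ 0) :
    ∀ f : RatFunc ℂ, IsLaurent f → subst Xv⁻¹ f = f →
      Cc (q + q⁻¹) * ((Xv + Xv⁻¹) * DsymOp q a b c d ((Xv + Xv⁻¹) * f))
        - (Xv + Xv⁻¹) * ((Xv + Xv⁻¹) * DsymOp q a b c d f)
        - DsymOp q a b c d ((Xv + Xv⁻¹) * ((Xv + Xv⁻¹) * f))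
      = Cc ((1 - q⁻¹) ^ 2 * (esym3 a b c d + q * esym1 a b c d)) * ((Xv + Xv⁻¹) * f)
        + Cc ((q - q⁻¹) ^ 2) * DsymOp q a b c d f
        + Cc (-(q ^ (-3 : ℤ)) * (1 - q) ^ 2 * (1 + q) *
            (esym4 a b c d + q * esym2 a b c d + q ^ 2)) * f :=
  stmt10_general q a b c d hq

end
end

section
/- The forward shift relation holds for monic Askey–Wilson polynomials: (P_n[q^{-1/2}z; a,b,c,d | q] − P_n[q^{1/2}z; a,b,c,d | q]) / ((q^{-n/2} − q^{n/2})(z − z^{-1})) = P_{n-1}[z; q^{1/2}a, q^{1/2}b, q^{1/2}c, q^{1/2}d | q] for n ≥ 1. -/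
open scoped BigOperators

noncomputable section

/-- The field of rational functions over ℂ, in which Laurent polynomials live. -/
local notation "F" => RatFunc ℂ

def compHom (c : ℂ) : Polynomial ℂ →+* Polynomial ℂ :=
  (Polynomial.aeval (Polynomial.C c * Polynomial.X) : Polynomial ℂ →ₐ[ℂ] Polynomial ℂ).toRingHom

lemma compHom_apply (c : ℂ) (u : Polynomial ℂ) :
    compHom c u = u.comp (Polynomial.C c * Polynomial.X) := by
  simp [compHom, Polynomial.aeval_def, Polynomial.comp]

lemma compHom_injective {c : ℂ} (hc : c ≠ 0) : Function.Injective (compHom c) := by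
  intro p r h
  rw [compHom_apply, compHom_apply] at h
  have key : ∀ u : Polynomial ℂ,
      (u.comp (Polynomial.C c * Polynomial.X)).comp (Polynomial.C c⁻¹ * Polynomial.X) = u := by
    intro u
    rw [Polynomial.comp_assoc]
    have : (Polynomial.C c * Polynomial.X).comp (Polynomial.C c⁻¹ * Polynomial.X)
        = Polynomial.X := by
      rw [Polynomial.mul_comp, Polynomial.C_comp, Polynomial.X_comp, ← mul_assoc,
        ← Polynomial.C_mul, mul_inv_cancel₀ hc, Polynomial.C_1, one_mul]
    rw [this, Polynomial.comp_X]
  calc p = (p.comp _).comp _ := (key p).symm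
    _ = (r.comp _).comp _ := by rw [h]
    _ = r := key r

def evalHom (c : ℂ) : Polynomial ℂ →+* F := Polynomial.eval₂RingHom RatFunc.C (Cc c * Xv)

lemma evalHom_eq (c : ℂ) : evalHom c = (algebraMap (Polynomial ℂ) F).comp (compHom c) := by
  apply Polynomial.ringHom_ext
  · intro x
    simp [evalHom, compHom_apply, Cc, RatFunc.algebraMap_C]
  · simp [evalHom, compHom_apply, Cc, Xv, RatFunc.algebraMap_C, RatFunc.algebraMap_X]

lemma evalHom_injective {c : ℂ} (hc : c ≠ 0) : Function.Injective (evalHom c) := by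
  rw [evalHom_eq]
  exact (IsFractionRing.injective (Polynomial ℂ) F).comp (compHom_injective hc)

lemma evalHom_cond {c : ℂ} (hc : c ≠ 0) :
    (nonZeroDivisors (Polynomial ℂ)) ≤ (nonZeroDivisors F).comap (evalHom c) := by
  intro p hp
  rw [Submonoid.mem_comap, mem_nonZeroDivisors_iff_ne_zero]
  rw [mem_nonZeroDivisors_iff_ne_zero] at hp
  intro h
  exact hp (evalHom_injective hc (by simpa using h))

def Phi (c : ℂ) (hc : c ≠ 0) : F →+* F := RatFunc.liftRingHom (evalHom c) (evalHom_cond hc)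

lemma subst_eq_Phi {c : ℂ} (hc : c ≠ 0) (f : F) : subst (Cc c * Xv) f = Phi c hc f := by
  conv_rhs => rw [← RatFunc.num_div_denom f]
  rw [Phi, RatFunc.liftRingHom_apply_div]
  rfl

lemma Phi_algebraMap (c : ℂ) (hc : c ≠ 0) (p : Polynomial ℂ) :
    Phi c hc (algebraMap (Polynomial ℂ) F p) = evalHom c p := by
  rw [← div_one (algebraMap (Polynomial ℂ) F p), ← map_one (algebraMap (Polynomial ℂ) F),
    Phi, RatFunc.liftRingHom_apply_div, map_one, div_one]

lemma Phi_C (c : ℂ) (hc : c ≠ 0) (x : ℂ) : Phi c hc (Cc x) = Cc x := by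
  have h : (Cc x : F) = algebraMap (Polynomial ℂ) F (Polynomial.C x) := by
    rw [RatFunc.algebraMap_C]; rfl
  rw [h, Phi_algebraMap]
  simp [evalHom, Cc]

lemma Phi_X (c : ℂ) (hc : c ≠ 0) : Phi c hc Xv = Cc c * Xv := by
  have h : (Xv : F) = algebraMap (Polynomial ℂ) F Polynomial.X := by
    rw [RatFunc.algebraMap_X]; rfl
  rw [h, Phi_algebraMap]
  simp only [evalHom, Polynomial.coe_eval₂RingHom, Polynomial.eval₂_X]
  rw [h]

lemma Cc_inv (x : ℂ) : Cc x⁻¹ = (Cc x)⁻¹ := map_inv₀ (RatFunc.C (K := ℂ)) x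

lemma Phi_Xinv (c : ℂ) (hc : c ≠ 0) : Phi c hc Xv⁻¹ = Cc c⁻¹ * Xv⁻¹ := by
  rw [map_inv₀, Phi_X, mul_inv, Cc_inv]
lemma qPoch_succ (x q : ℂ) (k : ℕ) : qPoch x q (k+1) = qPoch x q k * (1 - x * q ^ k) :=
  Finset.prod_range_succ _ _

lemma qPoch_succ' (x q : ℂ) (k : ℕ) : qPoch x q (k+1) = (1 - x) * qPoch (x*q) q k := by
  rw [qPoch, Finset.prod_range_succ']
  simp only [pow_zero, mul_one, qPoch]
  rw [mul_comm]
  congr 1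
  exact Finset.prod_congr rfl fun j _ => by ring

lemma qPoch_ne_zero (x q : ℂ) (k : ℕ) (h : ∀ j, j < k → 1 - x * q ^ j ≠ 0) :
    qPoch x q k ≠ 0 := by
  rw [qPoch, Finset.prod_ne_zero_iff]
  exact fun j hj => h j (Finset.mem_range.mp hj)

/-- The key scalar coefficient identity. -/
lemma coef_id (q a b c d s : ℂ) (hq : q ≠ 0) (hroot : ∀ m : ℕ, 1 ≤ m → q ^ m ≠ 1)
    (ha : a ≠ 0) (habcd : ∀ m : ℕ, a * b * c * d ≠ q⁻¹ ^ m)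
    (hs : s ^ 2 = q) (hs0 : s ≠ 0) (m k : ℕ) :
    a⁻¹ ^ (m+1) *
      (qPoch (q⁻¹ ^ (m+1)) q (k+1) * qPoch (a * b * q ^ (k+1)) q ((m+1) - (k+1))
        * qPoch (a * c * q ^ (k+1)) q ((m+1) - (k+1))
        * qPoch (a * d * q ^ (k+1)) q ((m+1) - (k+1)) * q ^ (k+1)
        / (qPoch q q (k+1) * qPoch (a * b * c * d * q ^ ((m+1) + (k+1)) / q) q ((m+1) - (k+1))))
      * (a * (s * q ^ k - s⁻¹))
    = (s⁻¹ ^ (m+1) - s ^ (m+1)) *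
      ((s*a)⁻¹ ^ m *
        (qPoch (q⁻¹ ^ m) q k * qPoch ((s*a) * (s*b) * q ^ k) q (m - k)
          * qPoch ((s*a) * (s*c) * q ^ k) q (m - k)
          * qPoch ((s*a) * (s*d) * q ^ k) q (m - k) * q ^ k
          / (qPoch q q k * qPoch ((s*a) * (s*b) * (s*c) * (s*d) * q ^ (m + k) / q) q (m - k)))) := by
  -- rewrite pochhammer arguments on the RHS to match the LHS
  have e1 : (s*a) * (s*b) * q ^ k = a * b * q ^ (k+1) := by rw [← hs]; ring
  have e2 : (s*a) * (s*c) * q ^ k = a * c * q ^ (k+1) := by rw [← hs]; ring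
  have e3 : (s*a) * (s*d) * q ^ k = a * d * q ^ (k+1) := by rw [← hs]; ring
  have e4 : (s*a) * (s*b) * (s*c) * (s*d) * q ^ (m + k) / q
      = a * b * c * d * q ^ ((m+1) + (k+1)) / q := by
    rw [← hs]; ring
  have e5 : (m+1) - (k+1) = m - k := by omega
  rw [e1, e2, e3, e4, e5]
  -- expand the (k+1)-pochhammers
  have e6 : qPoch (q⁻¹ ^ (m+1)) q (k+1) = (1 - q⁻¹ ^ (m+1)) * qPoch (q⁻¹ ^ m) q k := by
    rw [qPoch_succ']
    congr 2
    rw [pow_succ, mul_assoc, inv_mul_cancel₀ hq, mul_one]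
  rw [e6, qPoch_succ q q k]
  -- nonvanishing facts
  have hD1 : qPoch q q k ≠ 0 := by
    refine qPoch_ne_zero _ _ _ fun j _ => ?_
    have := hroot (j+1) (by omega)
    intro h
    apply this
    rw [pow_succ]
    linear_combination -h
  have hE : 1 - q * q ^ k ≠ 0 := by
    have := hroot (k+1) (by omega)
    intro h
    apply this
    rw [pow_succ]
    linear_combination -h
  have hD2 : qPoch (a * b * c * d * q ^ ((m+1) + (k+1)) / q) q (m - k) ≠ 0 := by
    refine qPoch_ne_zero _ _ _ fun j _ => ?_
    have h2 := habcd (m + k + 1 + j)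
    intro h
    apply h2
    have key : a * b * c * d * q ^ (m + k + 1 + j) = 1 := by
      field_simp at h
      have hq2 := mul_right_cancel₀ hq (by linear_combination -h : a * b * c * d * q ^ (m + k + 1 + j) * q = 1 * q)
      exact hq2
    rw [inv_pow]
    exact eq_inv_of_mul_eq_one_left (by linear_combination key)
  revert hD1 hE hD2
  generalize qPoch (q⁻¹ ^ m) q k = P
  generalize qPoch (a * b * q ^ (k + 1)) q (m - k) = M1
  generalize qPoch (a * c * q ^ (k + 1)) q (m - k) = M2
  generalize qPoch (a * d * q ^ (k + 1)) q (m - k) = M3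
  generalize qPoch q q k = D1
  generalize qPoch (a * b * c * d * q ^ ((m+1) + (k+1)) / q) q (m - k) = D2
  intro hD1 hE hD2
  have hden1 : D1 * (1 - q * q ^ k) * D2 ≠ 0 := mul_ne_zero (mul_ne_zero hD1 hE) hD2
  have hden2 : D1 * D2 ≠ 0 := mul_ne_zero hD1 hD2
  have key : (a⁻¹ ^ (m+1) * ((1 - q⁻¹ ^ (m+1)) * P * M1 * M2 * M3 * q ^ (k+1))
        * (a * (s * q ^ k - s⁻¹))) * (D1 * D2)
      = ((s⁻¹ ^ (m+1) - s ^ (m+1)) * ((s*a)⁻¹ ^ m * (P * M1 * M2 * M3 * q ^ k)))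
        * (D1 * (1 - q * q ^ k) * D2) := by
    subst hs
    simp only [inv_pow, mul_inv, mul_pow]
    field_simp [ha, hs0]
    ring
  have h2 : (a⁻¹ ^ (m+1) * ((1 - q⁻¹ ^ (m+1)) * P * M1 * M2 * M3 * q ^ (k+1))
        * (a * (s * q ^ k - s⁻¹))) / (D1 * (1 - q * q ^ k) * D2)
      = ((s⁻¹ ^ (m+1) - s ^ (m+1)) * ((s*a)⁻¹ ^ m * (P * M1 * M2 * M3 * q ^ k))) / (D1 * D2) := by
    rw [div_eq_div_iff hden1 hden2]
    linear_combination key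
  linear_combination h2

section Shift
variable (q s a : ℂ)

lemma Cc_mul (x y : ℂ) : Cc (x * y) = Cc x * Cc y := map_mul (RatFunc.C (K := ℂ)) x y
lemma Cc_one : Cc 1 = 1 := map_one (RatFunc.C (K := ℂ))
lemma Cc_sub (x y : ℂ) : Cc (x - y) = Cc x - Cc y := map_sub (RatFunc.C (K := ℂ)) x y

lemma prodA (hs : s ^ 2 = q) (hs0 : s ≠ 0) (k : ℕ) :
    ∏ j ∈ Finset.range (k+1), (1 - Cc a * (Cc s⁻¹ * Xv) * Cc (q^j))
      = (1 - Cc (a*s⁻¹) * Xv) * ∏ j ∈ Finset.range k, (1 - Cc (s*a) * Xv * Cc (q^j)) := by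
  rw [Finset.prod_range_succ', mul_comm]
  congr 1
  · have h3 : Cc (a * s⁻¹) = Cc a * Cc s⁻¹ := Cc_mul _ _
    rw [pow_zero, Cc_one, mul_one, h3]
    ring
  · refine Finset.prod_congr rfl fun j _ => ?_
    have hc : (a * s⁻¹) * q^(j+1) = (s*a) * q^j := by
      rw [← hs]; field_simp; ring
    have h2 : Cc (a * s⁻¹) * Cc (q^(j+1)) = Cc (s*a) * Cc (q^j) := by
      rw [← Cc_mul, ← Cc_mul, hc]
    have h3 : Cc (a * s⁻¹) = Cc a * Cc s⁻¹ := Cc_mul _ _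
    linear_combination (-Xv) * h2 + Xv * Cc (q^(j+1)) * h3

lemma prodD (hs : s ^ 2 = q) (hs0 : s ≠ 0) (k : ℕ) :
    ∏ j ∈ Finset.range (k+1), (1 - Cc a * (Cc s⁻¹ * Xv⁻¹) * Cc (q^j))
      = (1 - Cc (a*s⁻¹) * Xv⁻¹) * ∏ j ∈ Finset.range k, (1 - Cc (s*a) * Xv⁻¹ * Cc (q^j)) := by
  rw [Finset.prod_range_succ', mul_comm]
  congr 1
  · have h3 : Cc (a * s⁻¹) = Cc a * Cc s⁻¹ := Cc_mul _ _
    rw [pow_zero, Cc_one, mul_one, h3]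
    ring
  · refine Finset.prod_congr rfl fun j _ => ?_
    have hc : (a * s⁻¹) * q^(j+1) = (s*a) * q^j := by
      rw [← hs]; field_simp; ring
    have h2 : Cc (a * s⁻¹) * Cc (q^(j+1)) = Cc (s*a) * Cc (q^j) := by
      rw [← Cc_mul, ← Cc_mul, hc]
    have h3 : Cc (a * s⁻¹) = Cc a * Cc s⁻¹ := Cc_mul _ _
    linear_combination (-Xv⁻¹) * h2 + Xv⁻¹ * Cc (q^(j+1)) * h3

lemma prodC (k : ℕ) :
    ∏ j ∈ Finset.range (k+1), (1 - Cc a * (Cc s * Xv) * Cc (q^j))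
      = (∏ j ∈ Finset.range k, (1 - Cc (s*a) * Xv * Cc (q^j)))
        * (1 - Cc (a*s) * Xv * Cc (q^k)) := by
  rw [Finset.prod_range_succ]
  congr 1
  · refine Finset.prod_congr rfl fun j _ => ?_
    have h3 : Cc (s * a) = Cc s * Cc a := Cc_mul _ _
    linear_combination Xv * Cc (q^j) * h3
  · have h3 : Cc (a * s) = Cc a * Cc s := Cc_mul _ _
    linear_combination Xv * Cc (q^k) * h3

lemma prodB (k : ℕ) :
    ∏ j ∈ Finset.range (k+1), (1 - Cc a * (Cc s * Xv⁻¹) * Cc (q^j))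
      = (∏ j ∈ Finset.range k, (1 - Cc (s*a) * Xv⁻¹ * Cc (q^j)))
        * (1 - Cc (a*s) * Xv⁻¹ * Cc (q^k)) := by
  rw [Finset.prod_range_succ]
  congr 1
  · refine Finset.prod_congr rfl fun j _ => ?_
    have h3 : Cc (s * a) = Cc s * Cc a := Cc_mul _ _
    linear_combination Xv⁻¹ * Cc (q^j) * h3
  · have h3 : Cc (a * s) = Cc a * Cc s := Cc_mul _ _
    linear_combination Xv⁻¹ * Cc (q^k) * h3

/-- The key basis-shift identity. -/
lemma shift (hs : s ^ 2 = q) (hs0 : s ≠ 0) (k : ℕ) :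
    (∏ j ∈ Finset.range (k+1), (1 - Cc a * (Cc s⁻¹ * Xv) * Cc (q^j)))
      * (∏ j ∈ Finset.range (k+1), (1 - Cc a * (Cc s * Xv⁻¹) * Cc (q^j)))
    - (∏ j ∈ Finset.range (k+1), (1 - Cc a * (Cc s * Xv) * Cc (q^j)))
      * (∏ j ∈ Finset.range (k+1), (1 - Cc a * (Cc s⁻¹ * Xv⁻¹) * Cc (q^j)))
    = Cc (a * (s * q^k - s⁻¹)) * (Xv - Xv⁻¹)
      * ((∏ j ∈ Finset.range k, (1 - Cc (s*a) * Xv * Cc (q^j)))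
        * (∏ j ∈ Finset.range k, (1 - Cc (s*a) * Xv⁻¹ * Cc (q^j)))) := by
  rw [prodA q s a hs hs0 k, prodB q s a k, prodC q s a k, prodD q s a hs hs0 k]
  have hbr : (1 - Cc (a*s⁻¹) * Xv) * (1 - Cc (a*s) * Xv⁻¹ * Cc (q^k))
      - (1 - Cc (a*s) * Xv * Cc (q^k)) * (1 - Cc (a*s⁻¹) * Xv⁻¹)
      = Cc (a * (s * q^k - s⁻¹)) * (Xv - Xv⁻¹) := by
    have h1 : Cc (a * (s * q^k - s⁻¹)) = Cc (a*s) * Cc (q^k) - Cc (a*s⁻¹) := by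
      rw [← Cc_mul, ← Cc_sub]
      congr 1
      ring
    rw [h1]
    ring
  linear_combination ((∏ j ∈ Finset.range k, (1 - Cc (s*a) * Xv * Cc (q^j)))
    * (∏ j ∈ Finset.range k, (1 - Cc (s*a) * Xv⁻¹ * Cc (q^j)))) * hbr

end Shift

lemma main (q a b c d s : ℂ) (hq : q ≠ 0) (hroot : ∀ m : ℕ, 1 ≤ m → q ^ m ≠ 1)
    (ha : a ≠ 0) (habcd : ∀ m : ℕ, a * b * c * d ≠ q⁻¹ ^ m)
    (hs : s ^ 2 = q) (hs0 : s ≠ 0) (m : ℕ) :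
    subst (Cc s⁻¹ * Xv) (AWP q a b c d (m+1)) - subst (Cc s * Xv) (AWP q a b c d (m+1))
      = Cc (s⁻¹ ^ (m+1) - s ^ (m+1)) * (Xv - Xv⁻¹) * AWP q (s*a) (s*b) (s*c) (s*d) m := by
  have hsi : s⁻¹ ≠ 0 := inv_ne_zero hs0
  rw [subst_eq_Phi hsi, subst_eq_Phi hs0]
  simp only [AWP, map_mul, map_sum, map_prod, map_sub, map_one, Phi_C, Phi_X, Phi_Xinv, inv_inv]
  rw [← mul_sub, ← Finset.sum_sub_distrib, Finset.sum_range_succ']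
  simp only [Finset.range_zero, Finset.prod_empty, mul_one, sub_self, add_zero]
  simp only [Finset.mul_sum]
  refine Finset.sum_congr rfl fun k hk => ?_
  have hsh := shift q s a hs hs0 k
  have hco := coef_id q a b c d s hq hroot ha habcd hs hs0 m k
  have hcoF := congrArg Cc hco
  simp only [Cc_mul] at hcoF
  rw [show Cc (a * (s * q ^ k - s⁻¹)) = Cc a * Cc (s * q ^ k - s⁻¹) from Cc_mul _ _] at hsh
  linear_combination
    (Cc (a⁻¹ ^ (m + 1)) *
      Cc (qPoch (q⁻¹ ^ (m + 1)) q (k + 1) * qPoch (a * b * q ^ (k + 1)) q (m + 1 - (k + 1)) *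
            qPoch (a * c * q ^ (k + 1)) q (m + 1 - (k + 1)) *
            qPoch (a * d * q ^ (k + 1)) q (m + 1 - (k + 1)) * q ^ (k + 1) /
          (qPoch q q (k + 1) * qPoch (a * b * c * d * q ^ (m + 1 + (k + 1)) / q) q (m + 1 - (k + 1))))) * hsh
    + ((Xv - Xv⁻¹) * (∏ j ∈ Finset.range k, (1 - Cc (s * a) * Xv * Cc (q ^ j)))
        * (∏ j ∈ Finset.range k, (1 - Cc (s * a) * Xv⁻¹ * Cc (q ^ j)))) * hcoF

theorem stmt15 (q a b c d : ℂ) (hq : q ≠ 0) (hroot : ∀ m : ℕ, 1 ≤ m → q ^ m ≠ 1)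
    (ha : a ≠ 0) (hb : b ≠ 0) (hc : c ≠ 0) (hd : d ≠ 0)
    (habcd : ∀ m : ℕ, a * b * c * d ≠ q⁻¹ ^ m) (s : ℂ) (hs : s ^ 2 = q) :
    ∀ n : ℕ, 1 ≤ n →
      (subst ((Cc s)⁻¹ * Xv) (AWP q a b c d n) - subst (Cc s * Xv) (AWP q a b c d n)) /
          (Cc (s ^ (-(n : ℤ)) - s ^ (n : ℤ)) * (Xv - Xv⁻¹))
        = AWP q (s * a) (s * b) (s * c) (s * d) (n - 1) := by
  have hs0 : s ≠ 0 := by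
    intro h0
    apply hq
    rw [← hs, h0]
    ring
  intro n hn
  obtain ⟨m, rfl⟩ : ∃ m, n = m + 1 := ⟨n - 1, by omega⟩
  have hCc : ∀ x : ℂ, x ≠ 0 → Cc x ≠ 0 := by
    intro x hx h
    exact hx (by simpa [Cc] using congrArg (RatFunc.eval (RingHom.id ℂ) 0) h)
  have hXne : (Xv : F) ≠ 0 := RatFunc.X_ne_zero
  have hXY : (Xv : F) - Xv⁻¹ ≠ 0 := by
    intro h
    have h1 : (Xv : F) = Xv⁻¹ := sub_eq_zero.mp h
    have h2 : (Xv : F) * Xv = 1 := by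
      nth_rewrite 2 [h1]
      exact mul_inv_cancel₀ hXne
    have h3 : (algebraMap (Polynomial ℂ) F) (Polynomial.X * Polynomial.X)
        = algebraMap (Polynomial ℂ) F 1 := by
      rw [map_mul, map_one, RatFunc.algebraMap_X]
      exact h2
    have h4 := IsFractionRing.injective (Polynomial ℂ) F h3
    have h5 := congrArg (Polynomial.eval (2:ℂ)) h4
    norm_num at h5
  have hE : s⁻¹ ^ (m+1) - s ^ (m+1) ≠ 0 := by
    intro h0
    have h1 : s⁻¹ ^ (m+1) = s ^ (m+1) := sub_eq_zero.mp h0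
    apply hroot (m+1) (by omega)
    calc q ^ (m+1) = (s^2) ^ (m+1) := by rw [hs]
      _ = s ^ (m+1) * s ^ (m+1) := by ring
      _ = s ^ (m+1) * s⁻¹ ^ (m+1) := by rw [h1]
      _ = (s * s⁻¹) ^ (m+1) := by rw [mul_pow]
      _ = 1 := by rw [mul_inv_cancel₀ hs0, one_pow]
  have hne : Cc (s⁻¹ ^ (m+1) - s ^ (m+1)) * ((Xv : F) - Xv⁻¹) ≠ 0 :=
    mul_ne_zero (hCc _ hE) hXY
  have hzp : s ^ (-((m+1 : ℕ) : ℤ)) - s ^ (((m+1 : ℕ)) : ℤ) = s⁻¹ ^ (m+1) - s ^ (m+1) := by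
    rw [zpow_neg, zpow_natCast, inv_pow]
  rw [← Cc_inv, Nat.add_sub_cancel, hzp,
    main q a b c d s hq hroot ha habcd hs hs0 m,
    mul_div_cancel_left₀ _ hne]


end
end
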